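/- In KSPM(3), if the k-th avalanche fires column 2j but does not fire column 2j−1 (for j ≥ 1), then it fires exactly the even columns 0, 2, 4, …, 2j among columns ≤ 2j and none of the odd columns 1, 3, …, 2j−1, and the stable configuration π(k−1) has prefix (2,0)^{j−2} (i.e. π(k−1)_{2i} = 2 and π(k−1)_{2i+1} = 0 for 0 ≤ i ≤ j−3). -/

import Mathlib

/-- Effect of firing column `i` in KSPM(D), on height-difference configurations. -/
def step (D : ℕ) (σ : ℕ → ℕ) (i : ℕ) : ℕ → ℕ :=
  fun j =>
    if j = i then σ i - D
    else if j + 1 = i then σ j + (D - 1)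
    else if j = i + D - 1 then σ j + 1
    else σ j

/-- Transition on column `i`: `σ →ᵢ σ'`. -/
def KTrans (D : ℕ) (σ : ℕ → ℕ) (i : ℕ) (σ' : ℕ → ℕ) : Prop :=
  D ≤ σ i ∧ σ' = step D σ i

/-- A strategy (list of fired columns) is legal from `σ`. -/
def Legal (D : ℕ) : (ℕ → ℕ) → List ℕ → Prop
  | _, [] => True
  | σ, i :: s => D ≤ σ i ∧ Legal D (step D σ i) s

/-- Configuration obtained by applying a strategy. -/
def applyStrat (D : ℕ) : (ℕ → ℕ) → List ℕ → (ℕ → ℕ)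
  | σ, [] => σ
  | σ, i :: s => applyStrat D (step D σ i) s

/-- Reachability `σ →* σ'`. -/
def Reaches (D : ℕ) (σ σ' : ℕ → ℕ) : Prop :=
  ∃ s : List ℕ, Legal D σ s ∧ applyStrat D σ s = σ'

/-- A configuration is stable (a fixed point) if no transition is possible. -/
def Stable (D : ℕ) (σ : ℕ → ℕ) : Prop := ∀ i, σ i < D

/-- Initial configuration: `N` grains stacked on column 0 (height differences `(N,0,0,…)`). -/
def initConf (N : ℕ) : ℕ → ℕ := fun j => if j = 0 then N else 0

/-- `τ = π(N)`: the stable configuration reachable from `N` stacked grains. -/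
def IsPi (D N : ℕ) (τ : ℕ → ℕ) : Prop := Reaches D (initConf N) τ ∧ Stable D τ

/-- `σ^{↓0}`: add one grain on column 0. -/
def addGrain (σ : ℕ → ℕ) : ℕ → ℕ := Function.update σ 0 (σ 0 + 1)

/-- `s` is the leftmost (lexicographically minimal) strategy from `τ^{↓0}` to `τ'`. -/
def IsAvalancheFor (D : ℕ) (τ τ' : ℕ → ℕ) (s : List ℕ) : Prop :=
  Legal D (addGrain τ) s ∧ applyStrat D (addGrain τ) s = τ' ∧
    ∀ s' : List ℕ, Legal D (addGrain τ) s' → applyStrat D (addGrain τ) s' = τ' →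
      ¬ List.Lex (· < ·) s' s

/-- `s` is the `k`-th avalanche: leftmost strategy from `π(k-1)^{↓0}` to `π(k)`. -/
def IsAvalanche (D k : ℕ) (s : List ℕ) : Prop :=
  ∃ τ τ' : ℕ → ℕ, IsPi D (k - 1) τ ∧ IsPi D k τ' ∧ IsAvalancheFor D τ τ' s

/-- Position `t` (0-indexed) of strategy `s` is a peak: it exceeds all earlier fired columns. -/
def IsPeak (s : List ℕ) (t : ℕ) : Prop :=
  t < s.length ∧ ∀ t' < t, s.getD t' 0 < s.getD t 0

/-- Column `p` is a peak of `s`. -/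
def IsPeakVal (s : List ℕ) (p : ℕ) : Prop :=
  ∃ t : ℕ, IsPeak s t ∧ s.getD t 0 = p

/-!
From `τ^{↓0}` with `τ` stable no column fires twice: a second firing of `c` would need `6`
grains, but `c` holds at most `τ c + [c = 0]` and receives at most `2 + 1` from single firings
of `c + 1` and `c - 2`. So column `c` ends with
`τ c + [c = 0] + 2·[c + 1 fired] + [c - 2 fired] - 3·[c fired]` grains, and when it fires the
same count over the earlier firings is at least `3`.

If `2m` fires and `2m - 1` does not, then `2m + 1` did not fire before `2m`: a column `c > 0`
fires only after `c + 1` or `c - 2`, so the firings below a fired column leave no gap of two.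
The threshold at `2m` then gives `τ (2m) = 2` and that `2m - 2` fired, and stability at `2m - 1`,
which received two grains from `2m`, gives `τ (2m - 1) = 0` and that `2m - 3` did not fire.
Descend from `j`.
-/

section General

variable {D : ℕ}

lemma applyStrat_append (σ : ℕ → ℕ) (p q : List ℕ) :
    applyStrat D σ (p ++ q) = applyStrat D (applyStrat D σ p) q := by
  induction p generalizing σ with
  | nil => rfl
  | cons i p ih => exact ih _

lemma legal_append {σ : ℕ → ℕ} {p q : List ℕ} :
    Legal D σ (p ++ q) ↔ Legal D σ p ∧ Legal D (applyStrat D σ p) q := by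
  induction p generalizing σ with
  | nil => simp [Legal, applyStrat]
  | cons i p ih => simp [Legal, applyStrat, ih, and_assoc]

lemma legal_append_singleton {σ : ℕ → ℕ} {q : List ℕ} {c : ℕ} :
    Legal D σ (q ++ [c]) ↔ Legal D σ q ∧ D ≤ applyStrat D σ q c := by
  simp [legal_append, Legal]

lemma Legal.exists_append_singleton_of_mem {σ : ℕ → ℕ} {s : List ℕ} {c : ℕ}
    (hs : Legal D σ s) (hc : c ∈ s) : ∃ q, Legal D σ (q ++ [c]) ∧ q ⊆ s := by
  obtain ⟨q, r, rfl⟩ := List.append_of_mem hc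
  exact ⟨q, (legal_append.1 (by simpa using hs)).1, List.subset_append_left q _⟩

lemma step_add_ite (hD : 2 ≤ D) {σ : ℕ → ℕ} {i : ℕ} (hi : D ≤ σ i) (c : ℕ) :
    step D σ i c + (if i = c then D else 0) =
      σ c + (if i = c + 1 then D - 1 else 0) + if D - 1 ≤ c ∧ i = c - (D - 1) then 1 else 0 := by
  unfold step
  split_ifs <;> subst_vars <;> omega

lemma applyStrat_add_mul_count (hD : 2 ≤ D) {σ : ℕ → ℕ} {p : List ℕ} (hp : Legal D σ p)
    (c : ℕ) :
    applyStrat D σ p c + D * p.count c =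
      σ c + (D - 1) * p.count (c + 1) + if D - 1 ≤ c then p.count (c - (D - 1)) else 0 := by
  induction p generalizing σ with
  | nil => simp [applyStrat]
  | cons i p ih =>
    have h := ih hp.2
    have hstep := step_add_ite hD hp.1 c
    simp only [applyStrat, List.count_cons, beq_iff_eq]
    split_ifs at h hstep ⊢ <;> grind

lemma addGrain_apply (τ : ℕ → ℕ) (c : ℕ) : addGrain τ c = τ c + if c = 0 then 1 else 0 := by
  by_cases hc : c = 0 <;> simp [addGrain, hc]

lemma Legal.nodup_of_addGrain (hD : 2 ≤ D) {τ : ℕ → ℕ} (hτ : Stable D τ) {p : List ℕ}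
    (hp : Legal D (addGrain τ) p) : p.Nodup := by
  induction p using List.reverseRecOn with
  | nil => exact List.nodup_nil
  | append_singleton q c ih =>
    obtain ⟨hq, hc⟩ := legal_append_singleton.1 hp
    have hnd := ih hq
    rw [← List.concat_eq_append, List.nodup_concat]
    refine ⟨fun hcq => ?_, hnd⟩
    have hcount := applyStrat_add_mul_count hD hq c
    rw [hnd.count, if_pos hcq, hnd.count, hnd.count, addGrain_apply] at hcount
    have := hτ c
    split_ifs at hcount <;> omega

end General

section ThreeGrains

variable {τ : ℕ → ℕ} {p q s : List ℕ} {a c j : ℕ}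

lemma Legal.applyStrat_addGrain_add (hτ : Stable 3 τ) (hp : Legal 3 (addGrain τ) p) (c : ℕ) :
    applyStrat 3 (addGrain τ) p c + (if c ∈ p then 3 else 0) =
      τ c + (if c = 0 then 1 else 0) + (if c + 1 ∈ p then 2 else 0) +
        if 2 ≤ c ∧ c - 2 ∈ p then 1 else 0 := by
  have hnd := hp.nodup_of_addGrain (by norm_num) hτ
  have h := applyStrat_add_mul_count (by norm_num) hp c
  rw [hnd.count, hnd.count, hnd.count, addGrain_apply] at h
  simp only [show (3 : ℕ) - 1 = 2 from rfl] at h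
  rw [ite_and]
  split_ifs at h ⊢ <;> omega

lemma Legal.three_le_of_append_singleton (hτ : Stable 3 τ)
    (hp : Legal 3 (addGrain τ) (q ++ [c])) :
    c ∉ q ∧ 3 ≤ τ c + (if c = 0 then 1 else 0) + (if c + 1 ∈ q then 2 else 0) +
      if 2 ≤ c ∧ c - 2 ∈ q then 1 else 0 := by
  have hnd := hp.nodup_of_addGrain (by norm_num) hτ
  rw [← List.concat_eq_append, List.nodup_concat] at hnd
  obtain ⟨hq, hfire⟩ := legal_append_singleton.1 hp
  have h := hq.applyStrat_addGrain_add hτ c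
  rw [if_neg hnd.1] at h
  exact ⟨hnd.1, by omega⟩

lemma Legal.mem_or_pred_mem (hτ : Stable 3 τ) (hp : Legal 3 (addGrain τ) p) (hc : c ∈ p)
    (hac : a < c) : a ∈ p ∨ a - 1 ∈ p := by
  induction p using List.reverseRecOn generalizing c with
  | nil => simp at hc
  | append_singleton q x ih =>
    have hq := (legal_append_singleton.1 hp).1
    suffices a ∈ q ∨ a - 1 ∈ q by
      simpa only [List.mem_append] using this.imp Or.inl Or.inl
    rcases List.mem_append.1 hc with hc | hc
    · exact ih hq hc hac
    rw [List.mem_singleton] at hc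
    subst hc
    have hthree := (hp.three_le_of_append_singleton hτ).2
    have := hτ c
    by_cases hsucc : c + 1 ∈ q
    · exact ih hq hsucc (by omega)
    have hsub : c - 2 ∈ q := by
      by_contra h
      simp only [hsucc, h, and_false, if_false] at hthree
      split_ifs at hthree <;> omega
    rcases (by omega : c - 2 = a ∨ c - 2 = a - 1 ∨ a < c - 2) with h | h | h
    · exact Or.inl (h ▸ hsub)
    · exact Or.inr (h ▸ hsub)
    · exact ih hq hsub h

lemma Legal.mem_of_add_two_mem (hτ : Stable 3 τ) (hs : Legal 3 (addGrain τ) s)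
    (h2 : c + 2 ∈ s) (h1 : c + 1 ∉ s) : c ∈ s := by
  obtain ⟨q, hq, hqs⟩ := hs.exists_append_singleton_of_mem h2
  obtain ⟨hnot, hthree⟩ := hq.three_le_of_append_singleton hτ
  have h3 : c + 3 ∉ q := fun h3 =>
    ((legal_append_singleton.1 hq).1.mem_or_pred_mem hτ h3 (by omega : c + 2 < c + 3)).elim
      hnot fun h => h1 (hqs h)
  have := hτ (c + 2)
  by_contra hc
  have hcq : c ∉ q := fun h => hc (hqs h)
  simp only [h3, show c + 2 - 2 = c from rfl, hcq, and_false, if_false] at hthree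
  split_ifs at hthree <;> omega

lemma Legal.eq_two_of_mem_of_succ_not_mem (hτ : Stable 3 τ) (hs : Legal 3 (addGrain τ) s)
    (hc : c ∈ s) (h1 : c + 1 ∉ s) : τ c = 2 := by
  obtain ⟨q, hq, hqs⟩ := hs.exists_append_singleton_of_mem hc
  have hthree := (hq.three_le_of_append_singleton hτ).2
  have := hτ c
  have h1q : c + 1 ∉ q := fun h => h1 (hqs h)
  simp only [h1q, if_false] at hthree
  split_ifs at hthree <;> omega

lemma Legal.eq_zero_of_not_mem_of_succ_mem (hτ : Stable 3 τ) (hs : Legal 3 (addGrain τ) s)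
    (hfin : Stable 3 (applyStrat 3 (addGrain τ) s)) (hc : c ∉ s) (h1 : c + 1 ∈ s) : τ c = 0 := by
  have h := hs.applyStrat_addGrain_add hτ c
  have := hfin c
  simp only [hc, h1, if_false, if_true] at h
  split_ifs at h <;> omega

lemma Legal.not_mem_of_not_mem_of_add_three_mem (hτ : Stable 3 τ)
    (hs : Legal 3 (addGrain τ) s) (hfin : Stable 3 (applyStrat 3 (addGrain τ) s))
    (h2 : a + 2 ∉ s) (h3 : a + 3 ∈ s) : a ∉ s := by
  have h := hs.applyStrat_addGrain_add hτ (a + 2)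
  have := hfin (a + 2)
  intro ha
  simp only [h2, show a + 2 + 1 = a + 3 from rfl, h3, ha, show a + 2 - 2 = a from rfl, and_true,
    if_false, if_true] at h
  split_ifs at h <;> omega

lemma Legal.alternating_of_mem_of_pred_not_mem (hτ : Stable 3 τ) (hs : Legal 3 (addGrain τ) s)
    (hfin : Stable 3 (applyStrat 3 (addGrain τ) s)) (h2j : 2 * j ∈ s) (h2j1 : 2 * j - 1 ∉ s) :
    (∀ i ≤ j, 2 * i ∈ s) ∧ (∀ i < j, 2 * i + 1 ∉ s) ∧
      ∀ i < j, τ (2 * i) = 2 ∧ τ (2 * i + 1) = 0 := by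
  have key : ∀ i ≤ j, 2 * i ∈ s ∧ (0 < i → 2 * i - 1 ∉ s) := by
    refine fun i hi => Nat.decreasingInduction (fun k _ ih => ?_) ⟨h2j, fun _ => h2j1⟩ hi
    obtain ⟨hk2, hk1⟩ := ih
    rw [show 2 * (k + 1) = 2 * k + 2 by ring] at hk2
    replace hk1 : 2 * k + 1 ∉ s := by
      simpa [show 2 * (k + 1) - 1 = 2 * k + 1 by omega] using hk1
    refine ⟨hs.mem_of_add_two_mem hτ hk2 hk1, fun hk => ?_⟩
    obtain ⟨k, rfl⟩ : ∃ k', k = k' + 1 := ⟨k - 1, by omega⟩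
    rw [show 2 * (k + 1) - 1 = 2 * k + 1 by omega]
    exact hs.not_mem_of_not_mem_of_add_three_mem hτ hfin
      (by rwa [show 2 * k + 1 + 2 = 2 * (k + 1) + 1 by ring])
      (by rwa [show 2 * k + 1 + 3 = 2 * (k + 1) + 2 by ring])
  have hodd : ∀ i < j, 2 * i + 1 ∉ s := fun i hi => by
    simpa [show 2 * (i + 1) - 1 = 2 * i + 1 by omega] using (key (i + 1) hi).2
  refine ⟨fun i hi => (key i hi).1, hodd, fun i hi => ⟨?_, ?_⟩⟩
  · exact hs.eq_two_of_mem_of_succ_not_mem hτ (key i hi.le).1 (hodd i hi)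
  · exact hs.eq_zero_of_not_mem_of_succ_mem hτ hfin (hodd i hi)
      (by simpa [show 2 * i + 1 + 1 = 2 * (i + 1) by ring] using (key (i + 1) hi).1)

end ThreeGrains

theorem kspm3_alternating_prefix_general (k j : ℕ)
    (s : List ℕ) (τ τ' : ℕ → ℕ) (hτ : IsPi 3 (k - 1) τ) (hτ' : IsPi 3 k τ')
    (hav : IsAvalancheFor 3 τ τ' s)
    (h2j : 2 * j ∈ s) (h2j1 : 2 * j - 1 ∉ s) :
    (∀ i : ℕ, i ≤ j → 2 * i ∈ s) ∧
      (∀ i : ℕ, i < j → 2 * i + 1 ∉ s) ∧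
      (∀ i : ℕ, i + 3 ≤ j → τ (2 * i) = 2 ∧ τ (2 * i + 1) = 0) := by
  obtain ⟨hs, rfl, -⟩ := hav
  obtain ⟨heven, hodd, hvalues⟩ := hs.alternating_of_mem_of_pred_not_mem hτ.2 hτ'.2 h2j h2j1
  exact ⟨heven, hodd, fun i hi => hvalues i (by omega)⟩

/-- In KSPM(3): if the avalanche fires 2j but not 2j-1, then among columns ≤ 2j exactly
the even ones are fired, and π(k-1) starts with the prefix (2,0)^{j-2}. -/
theorem kspm3_alternating_prefix (k j : ℕ) (hk : 1 ≤ k) (hj : 1 ≤ j)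
    (s : List ℕ) (τ τ' : ℕ → ℕ) (hτ : IsPi 3 (k - 1) τ) (hτ' : IsPi 3 k τ')
    (hav : IsAvalancheFor 3 τ τ' s)
    (h2j : 2 * j ∈ s) (h2j1 : 2 * j - 1 ∉ s) :
    (∀ i : ℕ, i ≤ j → 2 * i ∈ s) ∧
      (∀ i : ℕ, i < j → 2 * i + 1 ∉ s) ∧
      (∀ i : ℕ, i + 3 ≤ j → τ (2 * i) = 2 ∧ τ (2 * i + 1) = 0) :=
  kspm3_alternating_prefix_general k j s τ τ' hτ hτ' hav h2j h2j1
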